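/- arXiv:1607.08473 — 2 statements merged into one kernel-verified Lean document; each statement's English description precedes it below -/
import Mathlib

section
/- Let ℓ ≥ 1 and let C be a circuit on ℓ qubits over the gate set {H, Z, CZ, CCZ}, i.e. a finite list of gates each of which is H_i, Z_i, CZ_{ij} (i ≠ j) or CCZ_{ijk} (i, j, k distinct), with unitary U given by the product of the corresponding matrices. Let h be the number of Hadamard gates in the list and set n = h + ℓ. Then there exists a multilinear polynomial f over F₂ in n variables of total degree at most 3 with zero constant coefficient such that ⟨0| H^{⊗ℓ} U H^{⊗ℓ} |0⟩ = gap(f) / 2^{h/2 + ℓ}. -/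
/-! The amplitude is computed as a path sum. The row vector `⟨0| H^{⊗ℓ} G₁ ⋯ Gₘ` keeps the shape
`y ↦ ∑_{x : x ∘ v = y} (-1)^{P(x)}`, where `v` names the variable currently holding the value of
each qubit. A diagonal gate `(-1)^{∏_{a ∈ s} y_a}` just adds the monomial `∏_{a ∈ s} X_{v a}` to
`P`. A Hadamard on qubit `i` introduces a fresh variable for the new value of qubit `i`, adds
`X_{v i} · X_new` to `P` and contributes `1/√2`. The outer `H^{⊗ℓ}` contribute the `ℓ` initial
variables and `2^{-ℓ/2}` each; summing over all outputs turns the path sum into `gap P`. -/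

open MvPolynomial

/-- Gates on `ℓ` qubits from the set {H, Z, CZ, CCZ}. -/
inductive Gate (ℓ : ℕ) where
  | H (i : Fin ℓ)
  | Z (i : Fin ℓ)
  | CZ (i j : Fin ℓ)
  | CCZ (i j k : Fin ℓ)

/-- Well-formedness: the control/target qubits of CZ and CCZ gates are distinct. -/
def Gate.wf {ℓ : ℕ} : Gate ℓ → Prop
  | .H _ => True
  | .Z _ => True
  | .CZ i j => i ≠ j
  | .CCZ i j k => i ≠ j ∧ i ≠ k ∧ j ≠ k

/-- The unitary matrix corresponding to a gate: `H i` acts as the Hadamard matrix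
`(1/√2)·[[1,1],[1,−1]]` on qubit `i` and as identity elsewhere; `Z i`, `CZ i j`, `CCZ i j k`
are the diagonal matrices with entries `(−1)^(x i)`, `(−1)^(x i * x j)`, `(−1)^(x i * x j * x k)`. -/
noncomputable def gateMatrix {ℓ : ℕ} : Gate ℓ → Matrix (Fin ℓ → ZMod 2) (Fin ℓ → ZMod 2) ℂ
  | .H i => fun x y =>
      if ∀ j, j ≠ i → x j = y j then (-1 : ℂ) ^ ((x i * y i : ZMod 2)).val / (Real.sqrt 2 : ℂ)
      else 0
  | .Z i => Matrix.diagonal fun x => (-1 : ℂ) ^ ((x i : ZMod 2)).val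
  | .CZ i j => Matrix.diagonal fun x => (-1 : ℂ) ^ ((x i * x j : ZMod 2)).val
  | .CCZ i j k => Matrix.diagonal fun x => (-1 : ℂ) ^ ((x i * x j * x k : ZMod 2)).val

/-- The number of Hadamard gates in a circuit (a list of gates). -/
def hadCount {ℓ : ℕ} (C : List (Gate ℓ)) : ℕ :=
  C.countP fun g => match g with | .H _ => true | _ => false

/-- The `ℓ`-fold tensor power of the Hadamard matrix, with entries `(−1)^(x·y) / 2^(ℓ/2)`. -/
noncomputable def Hpow (ℓ : ℕ) : Matrix (Fin ℓ → ZMod 2) (Fin ℓ → ZMod 2) ℂ :=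
  fun x y => (-1 : ℂ) ^ ((∑ i, x i * y i : ZMod 2)).val / (Real.sqrt 2 : ℂ) ^ ℓ

/-- `gap g` is the number of inputs on which `g` evaluates to `0` minus the number of inputs on
which it evaluates to `1`. -/
def gap {T : Type*} [Fintype T] [DecidableEq T] (g : (T → ZMod 2) → ZMod 2) : ℤ :=
  ∑ x : T → ZMod 2, (-1 : ℤ) ^ (g x).val

open Matrix Function

theorem ZMod.isIdempotentElem_two (a : ZMod 2) : IsIdempotentElem a := by
  fin_cases a <;> rfl

theorem Finset.prod_insert_of_isIdempotentElem {ι M : Type*} [CommMonoid M] [DecidableEq ι]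
    {f : ι → M} {i : ι} (hf : IsIdempotentElem (f i)) (s : Finset ι) :
    ∏ a ∈ insert i s, f a = f i * ∏ a ∈ s, f a := by
  by_cases hi : i ∈ s
  · rw [Finset.insert_eq_of_mem hi, ← Finset.mul_prod_erase s f hi, ← mul_assoc, hf.eq]
  · exact Finset.prod_insert hi

theorem Function.Injective.update_of_forall_ne {α β : Type*} [DecidableEq α] {f : α → β}
    (hf : Injective f) {b : β} (hb : ∀ a, f a ≠ b) (a : α) : Injective (update f a b) := by
  intro x y hxy
  by_cases hx : x = a <;> by_cases hy : y = a
  · rw [hx, hy]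
  all_goals simp only [update_apply, hx, hy, if_true, if_false] at hxy
  · exact absurd hxy.symm (hb y)
  · exact absurd hxy (hb x)
  · exact hf hxy

section PhasePoly

variable {σ τ R : Type*} [CommSemiring R]

structure IsPhasePoly (d : ℕ) (P : MvPolynomial σ R) : Prop where
  degreeOf_le_one : ∀ i, P.degreeOf i ≤ 1
  totalDegree_le : P.totalDegree ≤ d
  coeff_zero : P.coeff 0 = 0

namespace IsPhasePoly

variable {d : ℕ} {P Q : MvPolynomial σ R}

theorem zero : IsPhasePoly d (0 : MvPolynomial σ R) :=
  ⟨fun i => by simp, by simp, by simp⟩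

theorem add (hP : IsPhasePoly d P) (hQ : IsPhasePoly d Q) : IsPhasePoly d (P + Q) where
  degreeOf_le_one i :=
    (degreeOf_add_le _ _ _).trans (max_le (hP.degreeOf_le_one i) (hQ.degreeOf_le_one i))
  totalDegree_le := (totalDegree_add _ _).trans (max_le hP.totalDegree_le hQ.totalDegree_le)
  coeff_zero := by rw [coeff_add, hP.coeff_zero, hQ.coeff_zero, add_zero]

theorem rename {f : σ → τ} (hf : Injective f) (hP : IsPhasePoly d P) :
    IsPhasePoly d (rename f P) where
  degreeOf_le_one j := by
    classical
    by_cases hj : j ∈ Set.range f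
    · obtain ⟨i, rfl⟩ := hj
      rw [degreeOf_rename_of_injective hf]
      exact hP.degreeOf_le_one i
    · have hvars : j ∉ (MvPolynomial.rename f P).vars := fun h => by
        obtain ⟨i, -, rfl⟩ := Finset.mem_image.1 (vars_rename f P h)
        exact hj ⟨i, rfl⟩
      rw [mem_vars_iff_degreeOf_ne_zero, not_not] at hvars
      omega
  totalDegree_le := (totalDegree_rename_le f P).trans hP.totalDegree_le
  coeff_zero := by rw [← constantCoeff_eq, constantCoeff_rename, constantCoeff_eq, hP.coeff_zero]

theorem prod_X [Nontrivial R] {s : Finset σ} (hs : s.Nonempty) (hcard : s.card ≤ d) :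
    IsPhasePoly d (∏ i ∈ s, X i : MvPolynomial σ R) where
  degreeOf_le_one j := by
    classical
    refine (degreeOf_prod_le j s _).trans ?_
    simp only [degreeOf_X]
    rw [Finset.sum_ite_eq]
    split_ifs <;> simp
  totalDegree_le := (totalDegree_finsetProd s _).trans (by simpa [totalDegree_X] using hcard)
  coeff_zero := by
    rw [← constantCoeff_eq, map_prod]
    obtain ⟨i, hi⟩ := hs
    exact Finset.prod_eq_zero hi (constantCoeff_X R i)

theorem prod_X_comp [Nontrivial R] {ι : Type*} {f : ι → σ} (hf : Injective f) {s : Finset ι}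
    (hs : s.Nonempty) (hcard : s.card ≤ d) :
    IsPhasePoly d (∏ a ∈ s, X (f a) : MvPolynomial σ R) := by
  classical
  rw [← Finset.prod_image hf.injOn]
  exact prod_X (hs.image f) (Finset.card_image_le.trans hcard)

end IsPhasePoly

end PhasePoly

noncomputable def sgn (a : ZMod 2) : ℂ := (-1) ^ a.val

theorem sgn_add (a b : ZMod 2) : sgn (a + b) = sgn a * sgn b := by
  rw [sgn, sgn, sgn, ZMod.val_add, ← neg_one_pow_eq_pow_mod_two, pow_add]

section PathSum

variable {ι σ : Type*} [Fintype ι] [DecidableEq ι] [Fintype σ] [DecidableEq σ]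

noncomputable def pathSum (v : ι → σ) (P : MvPolynomial σ (ZMod 2)) : (ι → ZMod 2) → ℂ :=
  fun y => ∑ x with x ∘ v = y, sgn (eval x P)

noncomputable def phaseMatrix (s : Finset ι) : Matrix (ι → ZMod 2) (ι → ZMod 2) ℂ :=
  diagonal fun y => sgn (∏ a ∈ s, y a)

variable (v : ι → σ) (P : MvPolynomial σ (ZMod 2))

theorem pathSum_vecMul_apply {κ : Type*} (M : Matrix (ι → ZMod 2) κ ℂ) (z : κ) :
    (pathSum v P ᵥ* M) z = ∑ x, sgn (eval x P) * M (x ∘ v) z := by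
  rw [← Finset.sum_fiberwise Finset.univ (· ∘ v)]
  refine Finset.sum_congr rfl fun y _ => ?_
  rw [pathSum, Finset.sum_mul]
  exact Finset.sum_congr rfl fun x hx => by rw [(Finset.mem_filter.1 hx).2]

theorem sum_pathSum : ∑ y, pathSum v P y = ∑ x, sgn (eval x P) :=
  Finset.sum_fiberwise _ (· ∘ v) _

theorem pathSum_id_zero : pathSum id (0 : MvPolynomial ι (ZMod 2)) = 1 := by
  ext y
  simp [pathSum, sgn, Finset.filter_eq']

theorem pathSum_vecMul_phaseMatrix (s : Finset ι) :
    pathSum v P ᵥ* phaseMatrix s = pathSum v (P + ∏ a ∈ s, X (v a)) := by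
  ext y
  rw [phaseMatrix, vecMul_diagonal, pathSum, pathSum, Finset.sum_mul]
  refine Finset.sum_congr rfl fun x hx => ?_
  rw [(Finset.mem_filter.1 hx).2.symm, map_add, sgn_add, map_prod]
  simp only [eval_X, Function.comp_apply]

end PathSum

section Gates

variable {ℓ : ℕ}

theorem gateMatrix_H_apply (i : Fin ℓ) (y z : Fin ℓ → ZMod 2) :
    gateMatrix (.H i) y z =
      if ∀ k, k ≠ i → y k = z k then (Real.sqrt 2 : ℂ)⁻¹ * sgn (y i * z i) else 0 := by
  simp only [gateMatrix, sgn, div_eq_inv_mul]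

theorem gateMatrix_Z (i : Fin ℓ) : gateMatrix (.Z i) = phaseMatrix {i} := by
  simp [gateMatrix, phaseMatrix, sgn]

-- `x * x = x` in `ZMod 2`, so this also holds for `i = j`.
theorem gateMatrix_CZ (i j : Fin ℓ) : gateMatrix (.CZ i j) = phaseMatrix {i, j} := by
  simp [gateMatrix, phaseMatrix, sgn,
    Finset.prod_insert_of_isIdempotentElem (ZMod.isIdempotentElem_two _)]

theorem gateMatrix_CCZ (i j k : Fin ℓ) : gateMatrix (.CCZ i j k) = phaseMatrix {i, j, k} := by
  simp [gateMatrix, phaseMatrix, sgn, mul_assoc,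
    Finset.prod_insert_of_isIdempotentElem (ZMod.isIdempotentElem_two _)]

theorem pathSum_vecMul_hadamard {t : ℕ} (v : Fin ℓ → Fin t) (P : MvPolynomial (Fin t) (ZMod 2))
    (i : Fin ℓ) :
    pathSum v P ᵥ* gateMatrix (.H i) = (Real.sqrt 2 : ℂ)⁻¹ •
      pathSum (update (Fin.castSucc ∘ v) i (Fin.last t))
        (rename Fin.castSucc P + X (Fin.castSucc (v i)) * X (Fin.last t)) := by
  ext z
  rw [pathSum_vecMul_apply, Pi.smul_apply, pathSum, Finset.sum_filter,
    ← (Fin.snocEquiv fun _ => ZMod 2).sum_comp, Fintype.sum_prod_type_right, Finset.smul_sum]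
  -- a point of `Fin (t + 1) → ZMod 2` is `Fin.snoc x c`, with `c` the fresh variable's value,
  -- which the constraint forces to be the new value `z i` of qubit `i`
  refine Finset.sum_congr rfl fun x _ => ?_
  have hcond : ∀ c, (Fin.snocEquiv (fun _ => ZMod 2) (c, x)) ∘ update (Fin.castSucc ∘ v) i
      (Fin.last t) = z ↔ c = z i ∧ ∀ k, k ≠ i → (x ∘ v) k = z k := by
    intro c
    simp only [funext_iff, Function.comp_apply, update_apply]
    constructor
    · intro h
      exact ⟨by simpa [Fin.snocEquiv] using h i,
        fun k hk => by simpa [Fin.snocEquiv, hk] using h k⟩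
    · rintro ⟨rfl, h⟩ k
      by_cases hk : k = i
      · simp [Fin.snocEquiv, hk]
      · simp [Fin.snocEquiv, hk, h k hk]
  have heval : ∀ c, eval (Fin.snocEquiv (fun _ => ZMod 2) (c, x))
      (rename Fin.castSucc P + X (Fin.castSucc (v i)) * X (Fin.last t)) =
        eval x P + x (v i) * c := by
    intro c
    simp [eval_rename, Fin.snocEquiv]
  simp_rw [hcond, heval, ite_and, Finset.sum_ite_eq', Finset.mem_univ, if_true,
    gateMatrix_H_apply, sgn_add]
  split_ifs
  · rw [smul_eq_mul, Function.comp_apply]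
    ring
  · simp

end Gates

-- The final number of variables is a separate index `n` so that no `Fin` cast is ever needed.
theorem exists_pathSum_vecMul_circuit {ℓ : ℕ} (D : List (Gate ℓ)) {t n : ℕ}
    (htn : t + hadCount D = n) {v : Fin ℓ → Fin t} (hv : Injective v)
    {P : MvPolynomial (Fin t) (ZMod 2)} (hP : IsPhasePoly 3 P) :
    ∃ (v' : Fin ℓ → Fin n) (P' : MvPolynomial (Fin n) (ZMod 2)), IsPhasePoly 3 P' ∧
      pathSum v P ᵥ* (D.map gateMatrix).prod =
        (Real.sqrt 2 : ℂ)⁻¹ ^ hadCount D • pathSum v' P' := by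
  induction D generalizing t with
  | nil =>
    obtain rfl : t = n := htn
    exact ⟨v, P, hP, by simp [hadCount]⟩
  | cons g D ih =>
    rw [List.map_cons, List.prod_cons, ← vecMul_vecMul]
    have phase (s : Finset (Fin ℓ)) (hs : s.Nonempty) (hcard : s.card ≤ 3)
        (hg : hadCount (g :: D) = hadCount D) :
        ∃ (v' : Fin ℓ → Fin n) (P' : MvPolynomial (Fin n) (ZMod 2)), IsPhasePoly 3 P' ∧
          pathSum v P ᵥ* phaseMatrix s ᵥ* (D.map gateMatrix).prod =
            (Real.sqrt 2 : ℂ)⁻¹ ^ hadCount (g :: D) • pathSum v' P' := by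
      rw [pathSum_vecMul_phaseMatrix, hg]
      exact ih (hg ▸ htn) hv (hP.add (.prod_X_comp hv hs hcard))
    cases g with
    | H i =>
      have hcount : hadCount (Gate.H i :: D) = hadCount D + 1 := by simp [hadCount]
      have hX : IsPhasePoly 3
          (X (Fin.castSucc (v i)) * X (Fin.last t) : MvPolynomial (Fin (t + 1)) (ZMod 2)) := by
        rw [← Finset.prod_pair (Fin.castSucc_ne_last _)]
        exact .prod_X (Finset.insert_nonempty _ _) (Finset.card_le_two.trans (by norm_num))
      obtain ⟨v', P', hP', hD⟩ := ih (t := t + 1) (by omega)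
        ((Fin.castSucc_injective t |>.comp hv).update_of_forall_ne
          (fun k => Fin.castSucc_ne_last _) i)
        ((hP.rename (Fin.castSucc_injective t)).add hX)
      refine ⟨v', P', hP', ?_⟩
      rw [pathSum_vecMul_hadamard, smul_vecMul, hD, smul_smul, ← pow_succ', hcount]
    | Z i =>
      rw [gateMatrix_Z]
      exact phase {i} (Finset.singleton_nonempty i) (by simp) (by simp [hadCount])
    | CZ i j =>
      rw [gateMatrix_CZ]
      exact phase {i, j} (Finset.insert_nonempty _ _) (Finset.card_le_two.trans (by norm_num))
        (by simp [hadCount])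
    | CCZ i j k =>
      rw [gateMatrix_CCZ]
      exact phase {i, j, k} (Finset.insert_nonempty _ _) Finset.card_le_three (by simp [hadCount])

theorem Hpow_mul_mul_Hpow_apply_zero_zero {ℓ : ℕ}
    (U : Matrix (Fin ℓ → ZMod 2) (Fin ℓ → ZMod 2) ℂ) :
    (Hpow ℓ * U * Hpow ℓ) (fun _ => 0) (fun _ => 0) = (2 ^ ℓ : ℂ)⁻¹ * ∑ z, (1 ᵥ* U) z := by
  have hrow : Hpow ℓ (fun _ => 0) = ((Real.sqrt 2 : ℂ) ^ ℓ)⁻¹ • 1 := by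
    ext y
    simp [Hpow]
  have hcol (y : Fin ℓ → ZMod 2) : Hpow ℓ y (fun _ => 0) = ((Real.sqrt 2 : ℂ) ^ ℓ)⁻¹ := by
    simp [Hpow]
  have hsq : (Real.sqrt 2 : ℂ) ^ ℓ * (Real.sqrt 2 : ℂ) ^ ℓ = 2 ^ ℓ := by
    rw [← mul_pow, ← Complex.ofReal_mul, Real.mul_self_sqrt zero_le_two, Complex.ofReal_ofNat]
  calc (Hpow ℓ * U * Hpow ℓ) (fun _ => 0) (fun _ => 0)
      = (Hpow ℓ (fun _ => 0) ᵥ* U ᵥ* Hpow ℓ) (fun _ => 0) := rfl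
    _ = ((Real.sqrt 2 : ℂ) ^ ℓ * (Real.sqrt 2 : ℂ) ^ ℓ)⁻¹ * ∑ z, (1 ᵥ* U) z := by
      rw [hrow, smul_vecMul]
      simp only [vecMul, dotProduct, Pi.smul_apply, smul_eq_mul, hcol, ← Finset.sum_mul,
        ← Finset.mul_sum, mul_inv]
      ring
    _ = _ := by rw [hsq]

theorem circuit_polynomial_correspondence_general (ℓ : ℕ) (C : List (Gate ℓ)) :
    ∃ f : MvPolynomial (Fin (hadCount C + ℓ)) (ZMod 2),
      (∀ i, f.degreeOf i ≤ 1) ∧ f.totalDegree ≤ 3 ∧ f.coeff 0 = 0 ∧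
      (Hpow ℓ * (C.map gateMatrix).prod * Hpow ℓ) (fun _ => 0) (fun _ => 0)
        = ((gap fun x => eval x f : ℤ) : ℂ)
            / ((Real.sqrt 2 : ℂ) ^ hadCount C * 2 ^ ℓ) := by
  obtain ⟨v, f, hf, hC⟩ :=
    exists_pathSum_vecMul_circuit C (add_comm ℓ _) injective_id IsPhasePoly.zero
  refine ⟨f, hf.degreeOf_le_one, hf.totalDegree_le, hf.coeff_zero, ?_⟩
  have hgap : ((gap fun x => eval x f : ℤ) : ℂ) = ∑ x, sgn (eval x f) := by
    simp [gap, sgn]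
  rw [Hpow_mul_mul_Hpow_apply_zero_zero, ← pathSum_id_zero, hC]
  simp only [Pi.smul_apply, smul_eq_mul, ← Finset.mul_sum, sum_pathSum, ← hgap, inv_pow]
  field_simp

/-- For any circuit `C` on `ℓ ≥ 1` qubits over the gate set {H, Z, CZ, CCZ},
with `h` Hadamard gates and `n = h + ℓ`, there is a multilinear polynomial `f` over `𝔽₂` in `n`
variables of total degree at most 3 with zero constant coefficient such that
`⟨0| H^{⊗ℓ} U H^{⊗ℓ} |0⟩ = gap(f) / 2^(h/2 + ℓ)`. -/
theorem circuit_polynomial_correspondence (ℓ : ℕ) (hℓ : 1 ≤ ℓ) (C : List (Gate ℓ))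
    (hwf : ∀ g ∈ C, g.wf) :
    ∃ f : MvPolynomial (Fin (hadCount C + ℓ)) (ZMod 2),
      (∀ i, f.degreeOf i ≤ 1) ∧ f.totalDegree ≤ 3 ∧ f.coeff 0 = 0 ∧
      (Hpow ℓ * (C.map gateMatrix).prod * Hpow ℓ) (fun _ => 0) (fun _ => 0)
        = ((gap fun x => eval x f : ℤ) : ℂ)
            / ((Real.sqrt 2 : ℂ) ^ hadCount C * 2 ^ ℓ) :=
  circuit_polynomial_correspondence_general ℓ C
end

section
/- For every multilinear polynomial f over F₂ in n variables of total degree at most 3 with zero constant coefficient, there exist m, k ∈ ℕ and a multilinear polynomial f' over F₂ in m variables of total degree at most 3 with zero constant coefficient, such that every variable of f' occurs in at most 3 monomials of f', and gap(f') = 2^k · gap(f). -/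
/-!
A multilinear polynomial over `𝔽₂` is the sum, over the variable sets of its monomials, of the
products of their variables, so we work with such set systems.

Replace each variable `xᵢ`, occurring in `tᵢ` monomials, by copies `yᵢ₀, …, yᵢₜᵢ`, the `k`-th
monomial containing `xᵢ` using `yᵢₖ`, and for every `j < tᵢ` add a fresh variable `zᵢⱼ` with the
two monomials `zᵢⱼ yᵢⱼ + zᵢⱼ yᵢ₍ⱼ₊₁₎`. Summing `(-1)^f'` over `zᵢⱼ` gives `2` when
`yᵢⱼ = yᵢ₍ⱼ₊₁₎` and `0` otherwise, so only the assignments constant along each chain survive, and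
on those `f'` agrees with `f`: hence `gap f' = 2^#z · gap f`. Every `yᵢⱼ` lies in at most one
monomial of `f` and two chain monomials, every `zᵢⱼ` in two, and no degree grows beyond `3`.
-/

open MvPolynomial

open Finset

lemma AddChar.map_sum_eq_prod {ι A M : Type*} [AddCommMonoid A] [CommMonoid M] (ψ : AddChar A M)
    (s : Finset ι) (f : ι → A) : ψ (∑ i ∈ s, f i) = ∏ i ∈ s, ψ (f i) :=
  map_prod ψ.toMonoidHom (fun i => Multiplicative.ofAdd (f i)) s

def signChar : AddChar (ZMod 2) ℤ where
  toFun u := (-1) ^ u.val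
  map_zero_eq_one' := rfl
  map_add_eq_mul' := by decide

lemma gap_eq_sum_signChar {T : Type*} [Fintype T] [DecidableEq T] (g : (T → ZMod 2) → ZMod 2) :
    gap g = ∑ x, signChar (g x) := rfl

lemma sum_signChar_dotProduct {κ : Type*} [Fintype κ] [DecidableEq κ] (c : κ → ZMod 2) :
    ∑ z : κ → ZMod 2, signChar (z ⬝ᵥ c) = if c = 0 then 2 ^ Fintype.card κ else 0 := by
  have h (γ : ZMod 2) : ∑ β : ZMod 2, signChar (β * γ) = if γ = 0 then 2 else 0 := by
    revert γ; decide
  simp_rw [dotProduct, AddChar.map_sum_eq_prod]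
  rw [← Fintype.prod_sum fun e β => signChar (β * c e)]
  simp_rw [h, prod_ite_zero]
  simp [funext_iff]

section SetPoly

variable {R σ ι : Type*} [CommSemiring R] [Fintype ι]

noncomputable def setPoly (S : ι → Finset σ) : MvPolynomial σ R := ∑ a, ∏ v ∈ S a, X v

lemma eval_setPoly (S : ι → Finset σ) (x : σ → R) :
    eval x (setPoly S) = ∑ a, ∏ v ∈ S a, x v := by
  simp [setPoly]

lemma sum_single_one_apply [DecidableEq σ] (s : Finset σ) (v : σ) :
    (∑ w ∈ s, Finsupp.single w 1 : σ →₀ ℕ) v = if v ∈ s then 1 else 0 := by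
  simp [Finsupp.finsetSum_apply, Finsupp.single_apply]

lemma support_setPoly_subset [DecidableEq σ] (S : ι → Finset σ) :
    (setPoly S : MvPolynomial σ R).support ⊆
      univ.image fun a => ∑ v ∈ S a, Finsupp.single v 1 := by
  intro m hm
  obtain ⟨a, -, ha⟩ := mem_biUnion.mp (support_sum hm)
  have : ∏ v ∈ S a, (X v : MvPolynomial σ R) = monomial (∑ v ∈ S a, Finsupp.single v 1) 1 :=
    (monomial_sum_one _ _).symm
  rw [this] at ha
  exact mem_image.mpr ⟨a, mem_univ _, (mem_singleton.mp (support_monomial_subset ha)).symm⟩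

variable [DecidableEq σ] {S : ι → Finset σ}

lemma degreeOf_setPoly_le_one (v : σ) : (setPoly S : MvPolynomial σ R).degreeOf v ≤ 1 := by
  rw [degreeOf_eq_sup]
  refine Finset.sup_le fun m hm => ?_
  obtain ⟨a, -, rfl⟩ := mem_image.mp (support_setPoly_subset S hm)
  rw [sum_single_one_apply]
  split_ifs <;> simp

lemma totalDegree_setPoly_le {k : ℕ} (hS : ∀ a, #(S a) ≤ k) :
    (setPoly S : MvPolynomial σ R).totalDegree ≤ k := by
  rw [totalDegree_eq]
  refine Finset.sup_le fun m hm => ?_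
  obtain ⟨a, -, rfl⟩ := mem_image.mp (support_setPoly_subset S hm)
  simpa [Finsupp.toMultiset_sum_single] using hS a

lemma coeff_zero_setPoly (hS : ∀ a, (S a).Nonempty) :
    (setPoly S : MvPolynomial σ R).coeff 0 = 0 := by
  by_contra h
  obtain ⟨a, -, ha⟩ := mem_image.mp (support_setPoly_subset S (mem_support_iff.mpr h))
  obtain ⟨v, hv⟩ := hS a
  simpa [sum_single_one_apply, hv] using DFunLike.congr_fun ha v

lemma card_filter_support_setPoly_le (v : σ) :
    #{m ∈ (setPoly S : MvPolynomial σ R).support | m v ≠ 0} ≤ #{a | v ∈ S a} := by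
  calc #{m ∈ (setPoly S : MvPolynomial σ R).support | m v ≠ 0}
      ≤ #((univ.image fun a => ∑ w ∈ S a, Finsupp.single w 1).filter fun m => m v ≠ 0) :=
        card_le_card (filter_subset_filter _ (support_setPoly_subset S))
    _ ≤ #{a | v ∈ S a} := by
        rw [filter_image]
        refine card_image_le.trans_eq ?_
        simp [sum_single_one_apply]

end SetPoly

lemma eq_setPoly_of_degreeOf_le_one {σ : Type*} {f : MvPolynomial σ (ZMod 2)}
    (hml : ∀ i, f.degreeOf i ≤ 1) : f = setPoly fun s : f.support => s.1.support := by
  classical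
  conv_lhs => rw [f.as_sum, ← sum_coe_sort f.support]
  refine sum_congr rfl fun s _ => ?_
  have hcoeff : coeff s f = 1 := by
    have h := mem_support_iff.mp s.2
    generalize coeff s f = c at h
    revert c; decide
  have hexp : s.1 = ∑ v ∈ s.1.support, Finsupp.single v 1 := by
    ext v
    have hle := (monomial_le_degreeOf v s.2).trans (hml v)
    rw [sum_single_one_apply]
    split_ifs with hv <;> rw [Finsupp.mem_support_iff] at hv <;> omega
  rw [hcoeff, hexp, monomial_sum_one]
  rfl

lemma card_support_le_totalDegree {σ R : Type*} [CommSemiring R] {f : MvPolynomial σ R}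
    {m : σ →₀ ℕ} (hm : m ∈ f.support) : #m.support ≤ f.totalDegree := by
  classical
  calc #m.support = #(Finsupp.toMultiset m).toFinset := by rw [Finsupp.toFinset_toMultiset]
    _ ≤ (Finsupp.toMultiset m).card := Multiset.toFinset_card_le _
    _ ≤ f.totalDegree := by
      rw [totalDegree_eq]
      exact Finset.le_sup (f := fun m => (Finsupp.toMultiset m).card) hm

lemma gap_comp_equiv {σ τ : Type*} [Fintype σ] [DecidableEq σ] [Fintype τ] [DecidableEq τ]
    (e : σ ≃ τ) (g : (σ → ZMod 2) → ZMod 2) : gap (fun x : τ → ZMod 2 => g (x ∘ e)) = gap g :=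
  Fintype.sum_equiv (e.arrowCongr (Equiv.refl _)).symm _ _ fun _ => rfl

lemma forall_castSucc_eq_succ_iff {σ β : Type*} {n : σ → ℕ} (y : (Σ i, Fin (n i + 1)) → β) :
    (∀ e : Σ i, Fin (n i), y ⟨e.1, e.2.castSucc⟩ = y ⟨e.1, e.2.succ⟩) ↔
      ∃ x : σ → β, x ∘ Sigma.fst = y := by
  constructor
  · intro h
    refine ⟨fun i => y ⟨i, 0⟩, funext fun ⟨i, j⟩ => ?_⟩
    induction j using Fin.induction with
    | zero => rfl
    | succ j ih => exact ih.trans (h ⟨i, j⟩)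
  · rintro ⟨x, rfl⟩ e
    rfl

lemma eq_of_mem_pair {σ : Type*} [DecidableEq σ] {n : σ → ℕ}
    {g : ∀ i, Fin (n i) → Fin (n i + 1)} (hg : ∀ i, Function.Injective (g i))
    {v : (Σ i, Fin (n i + 1)) ⊕ (Σ i, Fin (n i))} {e e' : Σ i, Fin (n i)}
    (he : v ∈ ({.inr e, .inl ⟨e.1, g e.1 e.2⟩} :
      Finset ((Σ i, Fin (n i + 1)) ⊕ (Σ i, Fin (n i)))))
    (he' : v ∈ ({.inr e', .inl ⟨e'.1, g e'.1 e'.2⟩} :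
      Finset ((Σ i, Fin (n i + 1)) ⊕ (Σ i, Fin (n i))))) : e = e' := by
  simp only [mem_insert, mem_singleton] at he he'
  rcases he with rfl | rfl <;> rcases he' with h | h
  · exact Sum.inr_injective h
  · exact absurd h Sum.inr_ne_inl
  · exact absurd h Sum.inl_ne_inr
  · obtain ⟨i, j⟩ := e
    obtain ⟨i', j'⟩ := e'
    obtain ⟨rfl, hj⟩ := Sigma.mk.inj_iff.mp (Sum.inl_injective h)
    exact congrArg _ (hg i (eq_of_heq hj))

namespace SetSplit

variable {σ ι : Type*} [DecidableEq σ] [Fintype ι] [DecidableEq ι] (S : ι → Finset σ)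

def occurrences (i : σ) : Finset ι := {a | i ∈ S a}

abbrev Copy := Σ i, Fin (#(occurrences S i) + 1)

abbrev Link := Σ i, Fin #(occurrences S i)

noncomputable def copyIndex (i : σ) (a : ι) : Fin (#(occurrences S i) + 1) :=
  if h : a ∈ occurrences S i then ((occurrences S i).equivFin ⟨a, h⟩).succ else 0

noncomputable def split : ι ⊕ Link S ⊕ Link S → Finset (Copy S ⊕ Link S)
  | .inl a => (S a).image fun i => .inl ⟨i, copyIndex S i a⟩
  | .inr (.inl e) => {.inr e, .inl ⟨e.1, e.2.castSucc⟩}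
  | .inr (.inr e) => {.inr e, .inl ⟨e.1, e.2.succ⟩}

variable {S}

lemma copyIndex_injOn (i : σ) : Set.InjOn (copyIndex S i) {a | i ∈ S a} := by
  intro a ha b hb hab
  have ha' : a ∈ occurrences S i := by simpa [occurrences] using ha
  have hb' : b ∈ occurrences S i := by simpa [occurrences] using hb
  rw [copyIndex, copyIndex, dif_pos ha', dif_pos hb'] at hab
  simpa using (occurrences S i).equivFin.injective (Fin.succ_injective _ hab)

lemma card_split_le {k : ℕ} (hk : 2 ≤ k) (hS : ∀ a, #(S a) ≤ k) :
    ∀ α, #(split S α) ≤ k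
  | .inl a => card_image_le.trans (hS a)
  | .inr (.inl _) | .inr (.inr _) => (card_le_two).trans hk

lemma split_nonempty (hS : ∀ a, (S a).Nonempty) : ∀ α, (split S α).Nonempty
  | .inl a => (hS a).image _
  | .inr (.inl _) | .inr (.inr _) => insert_nonempty _ _

lemma eq_of_mem_split_inl {v : Copy S ⊕ Link S} {a b : ι} (ha : v ∈ split S (.inl a))
    (hb : v ∈ split S (.inl b)) : a = b := by
  obtain ⟨i, hi, rfl⟩ := mem_image.mp ha
  obtain ⟨j, hj, hji⟩ := mem_image.mp hb
  obtain ⟨rfl, hidx⟩ := Sigma.mk.inj_iff.mp (Sum.inl_injective hji)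
  exact copyIndex_injOn j hi hj (eq_of_heq hidx).symm

variable [Fintype σ]

lemma card_filter_mem_split_le_three (v : Copy S ⊕ Link S) : #{α | v ∈ split S α} ≤ 3 := by
  have h₁ : #{a | v ∈ split S (.inl a)} ≤ 1 := card_le_one.mpr fun _ ha _ hb =>
    eq_of_mem_split_inl (mem_filter.mp ha).2 (mem_filter.mp hb).2
  have h₂ : #{e | v ∈ split S (.inr (.inl e))} ≤ 1 := card_le_one.mpr fun _ he _ he' =>
    eq_of_mem_pair (fun _ => Fin.castSucc_injective _) (mem_filter.mp he).2 (mem_filter.mp he').2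
  have h₃ : #{e | v ∈ split S (.inr (.inr e))} ≤ 1 := card_le_one.mpr fun _ he _ he' =>
    eq_of_mem_pair (fun _ => Fin.succ_injective _) (mem_filter.mp he).2 (mem_filter.mp he').2
  rw [card_filter, Fintype.sum_sum_type, Fintype.sum_sum_type, ← card_filter, ← card_filter,
    ← card_filter]
  omega

lemma sum_prod_split_sumElim {R : Type*} [CommSemiring R] (y : Copy S → R) (z : Link S → R) :
    ∑ α, ∏ v ∈ split S α, Sum.elim y z v =
      ∑ a, ∏ i ∈ S a, y ⟨i, copyIndex S i a⟩ +
        z ⬝ᵥ fun e => y ⟨e.1, e.2.castSucc⟩ + y ⟨e.1, e.2.succ⟩ := by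
  rw [Fintype.sum_sum_type, Fintype.sum_sum_type, dotProduct, ← sum_add_distrib]
  congr 1
  · refine sum_congr rfl fun a _ => prod_image fun i _ j _ hij => ?_
    exact congrArg Sigma.fst (Sum.inl_injective hij)
  · refine sum_congr rfl fun e _ => ?_
    simp [split, mul_add]

lemma gap_split : gap (fun x => ∑ α, ∏ v ∈ split S α, x v) =
    2 ^ Fintype.card (Link S) * gap (fun x => ∑ a, ∏ i ∈ S a, x i) := by
  set G : (Copy S → ZMod 2) → ZMod 2 := fun y => ∑ a, ∏ i ∈ S a, y ⟨i, copyIndex S i a⟩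
  set c : (Copy S → ZMod 2) → Link S → ZMod 2 :=
    fun y e => y ⟨e.1, e.2.castSucc⟩ + y ⟨e.1, e.2.succ⟩
  have hsplit : gap (fun x => ∑ α, ∏ v ∈ split S α, x v) =
      ∑ y, ∑ z : Link S → ZMod 2, signChar (G y + z ⬝ᵥ c y) := by
    rw [gap_eq_sum_signChar, ← Fintype.sum_prod_type']
    refine Fintype.sum_equiv (Equiv.sumArrowEquivProdArrow _ _ _) _ _ fun x => ?_
    conv_lhs => rw [← Sum.elim_comp_inl_inr x, sum_prod_split_sumElim]
    rfl
  have hfiber (y : Copy S → ZMod 2) : ∑ z : Link S → ZMod 2, signChar (G y + z ⬝ᵥ c y) =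
      if c y = 0 then 2 ^ Fintype.card (Link S) * signChar (G y) else 0 := by
    simp_rw [AddChar.map_add_eq_mul, ← mul_sum, sum_signChar_dotProduct]
    split_ifs <;> ring
  have hker : ({y | c y = 0} : Finset (Copy S → ZMod 2)) =
      univ.image (· ∘ Sigma.fst : (σ → ZMod 2) → Copy S → ZMod 2) := by
    ext y
    have hc : c y = 0 ↔ ∀ e : Link S, y ⟨e.1, e.2.castSucc⟩ = y ⟨e.1, e.2.succ⟩ := by
      simp only [funext_iff, Pi.zero_apply, c, CharTwo.add_eq_zero]
    rw [mem_filter, hc, forall_castSucc_eq_succ_iff]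
    simp
  have hinj : Function.Injective (· ∘ Sigma.fst : (σ → ZMod 2) → Copy S → ZMod 2) :=
    Function.Surjective.injective_comp_right fun i => ⟨⟨i, 0⟩, rfl⟩
  rw [hsplit, sum_congr rfl fun y _ => hfiber y, ← sum_filter, hker, sum_image hinj.injOn,
    gap_eq_sum_signChar, mul_sum]
  rfl

end SetSplit

open SetSplit

/-- For every multilinear polynomial `f` over `𝔽₂` in `n` variables of total
degree at most 3 with zero constant coefficient, there is a multilinear polynomial `f'` in `m`
variables of total degree at most 3 with zero constant coefficient in which every variable
occurs in at most 3 monomials, such that `gap(f') = 2^k · gap(f)` for some `k`. -/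
theorem sparsify_variable_occurrences (n : ℕ) (f : MvPolynomial (Fin n) (ZMod 2))
    (hml : ∀ i, f.degreeOf i ≤ 1) (hdeg : f.totalDegree ≤ 3) (hconst : f.coeff 0 = 0) :
    ∃ (m k : ℕ) (f' : MvPolynomial (Fin m) (ZMod 2)),
      (∀ i, f'.degreeOf i ≤ 1) ∧ f'.totalDegree ≤ 3 ∧ f'.coeff 0 = 0 ∧
      (∀ i : Fin m, (f'.support.filter fun mon => mon i ≠ 0).card ≤ 3) ∧
      gap (fun x => eval x f') = 2 ^ k * gap (fun x => eval x f) := by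
  classical
  set S : f.support → Finset (Fin n) := fun s => s.1.support
  have hS_card (s : f.support) : #(S s) ≤ 3 := (card_support_le_totalDegree s.2).trans hdeg
  have hS_nonempty (s : f.support) : (S s).Nonempty := by
    refine Finsupp.support_nonempty_iff.mpr fun h => mem_support_iff.mp s.2 ?_
    rw [h, hconst]
  have hf : gap (fun x => eval x f) = gap (fun x => ∑ s, ∏ i ∈ S s, x i) := by
    conv_lhs => rw [eq_setPoly_of_degreeOf_le_one hml]
    simp_rw [eval_setPoly]
    rfl
  let e := Fintype.equivFin (Copy S ⊕ Link S)
  refine ⟨_, Fintype.card (Link S), setPoly fun α => (split S α).map e.toEmbedding,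
    degreeOf_setPoly_le_one, ?_, ?_, fun i => ?_, ?_⟩
  · exact totalDegree_setPoly_le fun α =>
      (card_map _).trans_le (card_split_le (by norm_num) hS_card α)
  · exact coeff_zero_setPoly fun α => (split_nonempty hS_nonempty α).map
  · refine (card_filter_support_setPoly_le i).trans ?_
    refine (card_filter_mem_split_le_three (e.symm i)).trans_eq' ?_
    simp [mem_map_equiv]
  · simp_rw [eval_setPoly, prod_map, hf, ← gap_split]
    exact gap_comp_equiv e (fun y => ∑ α, ∏ v ∈ split S α, y v)
end
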